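/- (Dimension 48 case of the main theorem.) Define P₄₈(z) = (1 − z)⁶ − (45/8)(1 − z)³ z² + (3915/2048) z⁴. For every real y > 0, P₄₈(z(y)) ≥ P₄₈(1/4) > 0; consequently the secrecy function Ξ(y) = P₄₈(z(y))^{-1} of the extremal even unimodular lattice in dimension 48 satisfies Ξ(y) ≤ Ξ(1) = P₄₈(1/4)^{-1}. -/

import Mathlib

/-- Jacobi theta constant θ₂ on the imaginary axis. -/
noncomputable def theta2 (y : ℝ) : ℝ := ∑' n : ℤ, Real.exp (-Real.pi * y * (n + 1/2)^2)

/-- Jacobi theta constant θ₃ on the imaginary axis. -/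
noncomputable def theta3 (y : ℝ) : ℝ := ∑' n : ℤ, Real.exp (-Real.pi * y * n^2)

/-- Jacobi theta constant θ₄ on the imaginary axis. -/
noncomputable def theta4 (y : ℝ) : ℝ := ∑' n : ℤ, (-1 : ℝ)^n * Real.exp (-Real.pi * y * n^2)

/-- The function z(y) = θ₂(y)⁴θ₄(y)⁴/θ₃(y)⁸. -/
noncomputable def zfun (y : ℝ) : ℝ := theta2 y ^ 4 * theta4 y ^ 4 / theta3 y ^ 8

/-- Denominator polynomial of the secrecy function of the extremal even
unimodular lattice in dimension 48. -/
noncomputable def P48 (z : ℝ) : ℝ := (1 - z) ^ 6 - 45 / 8 * (1 - z) ^ 3 * z ^ 2 + 3915 / 2048 * z ^ 4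

/-!
Rotating `ℤ²` by 45° gives the duplication formulas `θ₃(y)² = θ₃(2y)² + θ₂(2y)²` and
`θ₂(y)² = 2 θ₂(2y) θ₃(2y)`; splitting the sums for `θ₃` and `θ₄` into even and odd terms gives
`θ₃(y) = θ₃(4y) + θ₂(4y)` and `θ₄(y) = θ₃(4y) - θ₂(4y)`. Together they yield Jacobi's identity
`θ₂⁴ + θ₄⁴ = θ₃⁴`, so `z = pq / (p + q)²` with `p = θ₂⁴`, `q = θ₄⁴`, whence `0 ≤ z ≤ 1/4`, with
equality at `y = 1` because Poisson summation gives `θ₄(1) = θ₂(1)`. Finally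
`P₄₈(z) - P₄₈(1/4) = (1/4 - z) Q(z)` with `Q > 0` on `[0, 1/4]`.
-/

open Real Function Set

lemma HasSum.add_of_isCompl_range {α β γ₁ γ₂ : Type*} [AddCommMonoid α] [TopologicalSpace α]
    [ContinuousAdd α] {f : β → α} {g₁ : γ₁ → β} {g₂ : γ₂ → β} {a b : α}
    (h₁ : Injective g₁) (h₂ : Injective g₂) (hc : IsCompl (range g₁) (range g₂))
    (ha : HasSum (f ∘ g₁) a) (hb : HasSum (f ∘ g₂) b) : HasSum f (a + b) :=
  (h₁.hasSum_range_iff.2 ha).add_isCompl hc (h₂.hasSum_range_iff.2 hb)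

lemma HasSum.int_even_add_odd {α : Type*} [AddCommMonoid α] [TopologicalSpace α]
    [ContinuousAdd α] {f : ℤ → α} {a b : α} (he : HasSum (fun k ↦ f (2 * k)) a)
    (ho : HasSum (fun k ↦ f (2 * k + 1)) b) : HasSum f (a + b) := by
  have h₁ : Injective fun k : ℤ ↦ 2 * k := fun k l h ↦ by simpa using h
  have h₂ : Injective fun k : ℤ ↦ 2 * k + 1 := fun k l h ↦ by simpa using h
  have r₁ : range (fun k : ℤ ↦ 2 * k) = {n | Even n} := by
    ext n
    show (∃ k, 2 * k = n) ↔ ∃ k, n = k + k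
    exact ⟨fun ⟨k, hk⟩ ↦ ⟨k, by omega⟩, fun ⟨k, hk⟩ ↦ ⟨k, by omega⟩⟩
  have r₂ : range (fun k : ℤ ↦ 2 * k + 1) = {n | Odd n} := by
    ext n
    show (∃ k, 2 * k + 1 = n) ↔ ∃ k, n = 2 * k + 1
    exact ⟨fun ⟨k, hk⟩ ↦ ⟨k, by omega⟩, fun ⟨k, hk⟩ ↦ ⟨k, by omega⟩⟩
  exact HasSum.add_of_isCompl_range h₁ h₂ (r₁ ▸ r₂ ▸ Int.isCompl_even_odd) he ho

/-- Every `(n, m) ∈ ℤ²` is uniquely `(a + b, a - b)` or `(a + b + 1, a - b)`, according to the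
parity of `n + m`. -/
lemma HasSum.int_prod_add_sub {α : Type*} [AddCommMonoid α] [TopologicalSpace α]
    [ContinuousAdd α] {f : ℤ × ℤ → α} {a b : α}
    (he : HasSum (fun p : ℤ × ℤ ↦ f (p.1 + p.2, p.1 - p.2)) a)
    (ho : HasSum (fun p : ℤ × ℤ ↦ f (p.1 + p.2 + 1, p.1 - p.2)) b) : HasSum f (a + b) := by
  have h₁ : Injective fun p : ℤ × ℤ ↦ (p.1 + p.2, p.1 - p.2) := fun p q h ↦ by
    simp only [Prod.mk.injEq] at h; ext <;> omega
  have h₂ : Injective fun p : ℤ × ℤ ↦ (p.1 + p.2 + 1, p.1 - p.2) := fun p q h ↦ by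
    simp only [Prod.mk.injEq] at h; ext <;> omega
  have r₁ : range (fun p : ℤ × ℤ ↦ (p.1 + p.2, p.1 - p.2)) =
      (fun p : ℤ × ℤ ↦ p.1 + p.2) ⁻¹' {n | Even n} := by
    ext ⟨n, m⟩
    refine ⟨fun ⟨⟨a, b⟩, hab⟩ ↦ ⟨a, ?_⟩, fun ⟨k, hk⟩ ↦ ⟨(k, n - k), ?_⟩⟩ <;>
      simp_all only [Prod.mk.injEq] <;> omega
  have r₂ : range (fun p : ℤ × ℤ ↦ (p.1 + p.2 + 1, p.1 - p.2)) =
      (fun p : ℤ × ℤ ↦ p.1 + p.2) ⁻¹' {n | Odd n} := by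
    ext ⟨n, m⟩
    refine ⟨fun ⟨⟨a, b⟩, hab⟩ ↦ ⟨a, ?_⟩, fun ⟨k, hk⟩ ↦ ⟨(k, n - k - 1), ?_⟩⟩ <;>
      simp_all only [Prod.mk.injEq] <;> omega
  exact HasSum.add_of_isCompl_range h₁ h₂
    (r₁ ▸ r₂ ▸ Int.isCompl_even_odd.preimage _) he ho

noncomputable def shiftedTheta (y c : ℝ) : ℝ := ∑' n : ℤ, exp (-π * y * (n + c) ^ 2)

lemma summable_exp_neg_pi_mul_add_sq {y : ℝ} (hy : 0 < y) (c : ℝ) :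
    Summable fun n : ℤ ↦ exp (-π * y * (n + c) ^ 2) :=
  (HurwitzKernelBounds.summable_f_int 0 c hy).congr fun n ↦ by
    rw [HurwitzKernelBounds.f_int, pow_zero, one_mul]; ring_nf

lemma hasSum_shiftedTheta {y : ℝ} (hy : 0 < y) (c : ℝ) :
    HasSum (fun n : ℤ ↦ exp (-π * y * (n + c) ^ 2)) (shiftedTheta y c) :=
  (summable_exp_neg_pi_mul_add_sq hy c).hasSum

lemma hasSum_shiftedTheta_mul {y : ℝ} (hy : 0 < y) (c d : ℝ) :
    HasSum (fun p : ℤ × ℤ ↦ exp (-π * y * (p.1 + c) ^ 2) * exp (-π * y * (p.2 + d) ^ 2))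
      (shiftedTheta y c * shiftedTheta y d) :=
  (hasSum_shiftedTheta hy c).mul (hasSum_shiftedTheta hy d) <|
    (summable_exp_neg_pi_mul_add_sq hy c).mul_of_nonneg (summable_exp_neg_pi_mul_add_sq hy d)
      (fun _ ↦ (exp_pos _).le) fun _ ↦ (exp_pos _).le

lemma shiftedTheta_add_one (y c : ℝ) : shiftedTheta y (c + 1) = shiftedTheta y c := by
  rw [shiftedTheta, shiftedTheta,
    ← (Equiv.addRight (1 : ℤ)).tsum_eq fun n : ℤ ↦ exp (-π * y * (n + c) ^ 2)]
  refine tsum_congr fun n ↦ ?_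
  rw [Equiv.coe_addRight]
  push_cast
  ring_nf

/-- Summing the product of two Gaussians over `ℤ²` in the rotated coordinates
`(n, m) = (a + b, a - b)` or `(a + b + 1, a - b)`, using
`u² + v² = 2 ((u + v) / 2)² + 2 ((u - v) / 2)²`. -/
lemma shiftedTheta_mul {y : ℝ} (hy : 0 < y) (c d : ℝ) :
    shiftedTheta y c * shiftedTheta y d =
      shiftedTheta (2 * y) ((c + d) / 2) * shiftedTheta (2 * y) ((c - d) / 2) +
        shiftedTheta (2 * y) ((c + d + 1) / 2) * shiftedTheta (2 * y) ((c - d + 1) / 2) := by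
  have h2y : 0 < 2 * y := by positivity
  refine (hasSum_shiftedTheta_mul hy c d).unique (HasSum.int_prod_add_sub ?_ ?_)
  · refine (hasSum_shiftedTheta_mul h2y ((c + d) / 2) ((c - d) / 2)).congr_fun fun p ↦ ?_
    rw [← exp_add, ← exp_add]
    push_cast
    ring_nf
  · refine (hasSum_shiftedTheta_mul h2y ((c + d + 1) / 2) ((c - d + 1) / 2)).congr_fun fun p ↦ ?_
    rw [← exp_add, ← exp_add]
    push_cast
    ring_nf

lemma theta2_eq_shiftedTheta (y : ℝ) : theta2 y = shiftedTheta y (1 / 2) := rfl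

lemma theta3_eq_shiftedTheta (y : ℝ) : theta3 y = shiftedTheta y 0 := by
  simp [theta3, shiftedTheta]

lemma theta3_sq {y : ℝ} (hy : 0 < y) :
    theta3 y ^ 2 = theta3 (2 * y) ^ 2 + theta2 (2 * y) ^ 2 := by
  simpa [theta3_eq_shiftedTheta, theta2_eq_shiftedTheta, sq] using shiftedTheta_mul hy 0 0

lemma theta2_sq {y : ℝ} (hy : 0 < y) :
    theta2 y ^ 2 = 2 * theta2 (2 * y) * theta3 (2 * y) := by
  have h := shiftedTheta_mul hy (1 / 2) (1 / 2)
  rw [show (1 / 2 + 1 / 2 + 1) / 2 = (0 : ℝ) + 1 by norm_num, shiftedTheta_add_one] at h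
  norm_num at h
  simp only [theta3_eq_shiftedTheta, theta2_eq_shiftedTheta, sq, h]
  ring

lemma hasSum_theta2 {y : ℝ} (hy : 0 < y) :
    HasSum (fun n : ℤ ↦ exp (-π * y * (n + 1 / 2) ^ 2)) (theta2 y) :=
  hasSum_shiftedTheta hy _

lemma hasSum_theta3 {y : ℝ} (hy : 0 < y) :
    HasSum (fun n : ℤ ↦ exp (-π * y * n ^ 2)) (theta3 y) := by
  simpa [theta3_eq_shiftedTheta] using hasSum_shiftedTheta hy 0

lemma theta3_eq_add {y : ℝ} (hy : 0 < y) : theta3 y = theta3 (4 * y) + theta2 (4 * y) := by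
  have h4y : 0 < 4 * y := by positivity
  rw [theta3]
  refine (HasSum.int_even_add_odd ?_ ?_).tsum_eq
  · refine (hasSum_theta3 h4y).congr_fun fun k ↦ ?_
    push_cast
    ring_nf
  · refine (hasSum_theta2 h4y).congr_fun fun k ↦ ?_
    push_cast
    ring_nf

lemma theta4_eq_sub {y : ℝ} (hy : 0 < y) : theta4 y = theta3 (4 * y) - theta2 (4 * y) := by
  have h4y : 0 < 4 * y := by positivity
  rw [theta4, sub_eq_add_neg]
  refine (HasSum.int_even_add_odd ?_ ?_).tsum_eq
  · refine (hasSum_theta3 h4y).congr_fun fun k ↦ ?_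
    rw [(even_two_mul k).neg_one_zpow, one_mul]
    push_cast
    ring_nf
  · refine (hasSum_theta2 h4y).neg.congr_fun fun k ↦ ?_
    rw [(odd_two_mul_add_one k).neg_one_zpow, neg_one_mul]
    push_cast
    ring_nf

lemma theta2_pow_four_add_theta4_pow_four {y : ℝ} (hy : 0 < y) :
    theta2 y ^ 4 + theta4 y ^ 4 = theta3 y ^ 4 := by
  have h2y : 0 < 2 * y := by positivity
  have h₂ := theta2_sq h2y
  have h₃ := theta3_sq h2y
  rw [show 2 * (2 * y) = 4 * y by ring] at h₂ h₃
  rw [show theta2 y ^ 4 = (theta2 y ^ 2) ^ 2 by ring, theta2_sq hy, theta3_eq_add hy,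
    theta4_eq_sub hy]
  linear_combination (4 * theta3 (2 * y) ^ 2) * h₂ + (8 * theta2 (4 * y) * theta3 (4 * y)) * h₃

lemma theta2_pos {y : ℝ} (hy : 0 < y) : 0 < theta2 y :=
  (summable_exp_neg_pi_mul_add_sq hy _).tsum_pos (fun _ ↦ (exp_pos _).le) 0 (exp_pos _)

/-- Poisson summation, in the form `Complex.tsum_exp_neg_quadratic` with `a = y`, `b = i / 2`. -/
lemma theta4_eq_theta2_inv_div_sqrt {y : ℝ} (hy : 0 < y) : theta4 y = theta2 y⁻¹ / √y := by
  have key := Complex.tsum_exp_neg_quadratic (a := y) (by simpa using hy) (Complex.I / 2)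
  have hL : ∑' n : ℤ, Complex.exp (-π * y * n ^ 2 + 2 * π * (Complex.I / 2) * n) = theta4 y := by
    rw [theta4, Complex.ofReal_tsum]
    refine tsum_congr fun n ↦ ?_
    rw [show -(π : ℂ) * y * n ^ 2 + 2 * π * (Complex.I / 2) * n
        = n * (π * Complex.I) + ((-π * y * n ^ 2 : ℝ) : ℂ) by push_cast; ring,
      Complex.exp_add, Complex.exp_int_mul, Complex.exp_pi_mul_I, ← Complex.ofReal_exp]
    push_cast
    ring
  have hR : ∑' n : ℤ, Complex.exp (-π / y * (n + Complex.I * (Complex.I / 2)) ^ 2)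
      = theta2 y⁻¹ := by
    rw [theta2, Complex.ofReal_tsum, ← (Equiv.neg ℤ).tsum_eq]
    refine tsum_congr fun n ↦ ?_
    rw [Equiv.neg_apply, Complex.ofReal_exp, mul_div_assoc', Complex.I_mul_I]
    push_cast
    ring_nf
  have hsqrt : (y : ℂ) ^ (1 / 2 : ℂ) = (√y : ℝ) := by
    rw [sqrt_eq_rpow, Complex.ofReal_cpow hy.le]
    push_cast
    rfl
  rw [hL, hR, hsqrt] at key
  have : (theta4 y : ℂ) = (theta2 y⁻¹ / √y : ℝ) := by
    rw [key]
    push_cast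
    ring
  exact_mod_cast this

lemma theta4_one : theta4 1 = theta2 1 := by
  simpa using theta4_eq_theta2_inv_div_sqrt one_pos

lemma mul_div_add_sq_le_quarter (p q : ℝ) : p * q / (p + q) ^ 2 ≤ 1 / 4 := by
  rcases eq_or_ne (p + q) 0 with h | h
  · simp [h]
  · rw [div_le_iff₀ (by positivity)]
    nlinarith [sq_nonneg (p - q)]

lemma zfun_eq {y : ℝ} (hy : 0 < y) :
    zfun y = theta2 y ^ 4 * theta4 y ^ 4 / (theta2 y ^ 4 + theta4 y ^ 4) ^ 2 := by
  rw [zfun, theta2_pow_four_add_theta4_pow_four hy, ← pow_mul]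

lemma zfun_nonneg (y : ℝ) : 0 ≤ zfun y := by
  unfold zfun
  positivity

lemma zfun_le_quarter {y : ℝ} (hy : 0 < y) : zfun y ≤ 1 / 4 :=
  zfun_eq hy ▸ mul_div_add_sq_le_quarter _ _

lemma zfun_one : zfun 1 = 1 / 4 := by
  have h : theta2 1 ≠ 0 := (theta2_pos one_pos).ne'
  rw [zfun_eq one_pos, theta4_one]
  field_simp
  ring

lemma P48_sub_P48_quarter (z : ℝ) :
    P48 z - P48 (1 / 4) = (1 / 4 - z) * ((504821 / 131072 - 281611 / 32768 * z) +
      z ^ 2 * (25589 / 8192 - 11 / 2048 * z + z ^ 2 / 8 - z ^ 3)) := by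
  unfold P48
  ring

lemma P48_quarter_le {z : ℝ} (h₀ : 0 ≤ z) (h₁ : z ≤ 1 / 4) : P48 (1 / 4) ≤ P48 z := by
  have hz3 : z ^ 3 ≤ 1 / 64 := by
    calc z ^ 3 ≤ (1 / 4) ^ 3 := by gcongr
      _ = 1 / 64 := by norm_num
  have hquad : 0 ≤ 25589 / 8192 - 11 / 2048 * z + z ^ 2 / 8 - z ^ 3 := by
    nlinarith [sq_nonneg z]
  have hfactor : 0 ≤ (504821 / 131072 - 281611 / 32768 * z) +
      z ^ 2 * (25589 / 8192 - 11 / 2048 * z + z ^ 2 / 8 - z ^ 3) := by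
    have := mul_nonneg (sq_nonneg z) hquad
    linarith
  linarith [P48_sub_P48_quarter z, mul_nonneg (sub_nonneg.2 h₁) hfactor]

theorem secrecy_dim48 :
    (∀ y : ℝ, 0 < y → P48 (1 / 4) ≤ P48 (zfun y)) ∧ 0 < P48 (1 / 4) ∧
      (∀ y : ℝ, 0 < y → (P48 (zfun y))⁻¹ ≤ (P48 (zfun 1))⁻¹) ∧
      (P48 (zfun 1))⁻¹ = (P48 (1 / 4))⁻¹ := by
  have hmin : ∀ y : ℝ, 0 < y → P48 (1 / 4) ≤ P48 (zfun y) := fun y hy ↦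
    P48_quarter_le (zfun_nonneg y) (zfun_le_quarter hy)
  have hpos : 0 < P48 (1 / 4) := by norm_num [P48]
  refine ⟨hmin, hpos, fun y hy ↦ ?_, by rw [zfun_one]⟩
  rw [zfun_one]
  exact inv_anti₀ hpos (hmin y hy)
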